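/- Let Q be a quiver with no oriented cycles and suppose Q has at least one arrow. For any dimension vector d with all d_i ≥ 1, there is no nonzero element ρ of the path algebra kQ (lying in ε_j·kQ·ε_i for some vertices i,j) that annihilates every representation in rep_Q(d); equivalently, the intersection of the annihilators Ann(W) over all W ∈ rep_Q(d) contains no nonzero element of ε_j·(kQ)·ε_i. -/

import Mathlib

/-- Evaluation of a matrix representation on a path (product of the arrow matrices). -/
def pathMatrix {k : Type*} [Field k] {Q : Type*} [Quiver Q] {d : Q → ℕ}
    (W : ∀ {i j : Q}, (i ⟶ j) → Matrix (Fin (d j)) (Fin (d i)) k) :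
    ∀ {i j : Q}, Quiver.Path i j → Matrix (Fin (d j)) (Fin (d i)) k
  | _, _, Quiver.Path.nil => 1
  | _, _, Quiver.Path.cons p a => (W a) * (pathMatrix W p)

universe u v

/-!
Fix a path `ω₀` from `i` to `j` and a basis vector at every vertex. Let `W` send each arrow of
`ω₀` to the matrix unit between the chosen basis vectors and every other arrow to `0`. The
corresponding entry of `W_ω` is `1` if every arrow of `ω` lies on `ω₀` and `0` otherwise; without
oriented cycles this happens only for `ω = ω₀`, so that entry of `W_ρ` is the coefficient of `ω₀`
in `ρ`.
-/

namespace Quiver.Path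

variable {V : Type u} [Quiver.{v+1} V]

def arrows {a : V} : ∀ {b : V}, Path a b → List (Total V)
  | _, nil => []
  | _, cons p e => ⟨_, _, e⟩ :: p.arrows

@[simp]
lemma arrows_nil (a : V) : (nil : Path a a).arrows = [] := rfl

@[simp]
lemma arrows_cons {a b c : V} (p : Path a b) (e : b ⟶ c) :
    (p.cons e).arrows = ⟨b, c, e⟩ :: p.arrows := rfl

lemma reachable_of_mem_arrows {a b x y : V} {p : Path a b} {e : x ⟶ y}
    (h : ⟨x, y, e⟩ ∈ p.arrows) : Reachable y b := by
  induction p with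
  | nil => simp at h
  | cons p f ih =>
    rcases List.mem_cons.1 h with h | h
    · cases h
      exact .rfl
    · exact (ih h).trans ⟨f.toPath⟩

lemma not_reachable_of_hom (hacyc : ∀ (a : V) (p : Path a a), p.length = 0) {a b : V}
    (e : a ⟶ b) : ¬ Reachable b a := fun ⟨q⟩ => by
  simpa using hacyc _ (q.cons e)

lemma notMem_arrows_of_hom (hacyc : ∀ (a : V) (p : Path a a), p.length = 0) {a b c x : V}
    (p : Path a b) (f : b ⟶ c) (e : x ⟶ c) :
    ⟨x, c, e⟩ ∉ p.arrows := fun h =>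
  not_reachable_of_hom hacyc f (reachable_of_mem_arrows h)

lemma eq_of_forall_mem_arrows (hacyc : ∀ (a : V) (p : Path a a), p.length = 0) {a : V} :
    ∀ {b : V} (p q : Path a b), (∀ s ∈ p.arrows, s ∈ q.arrows) → p = q
  | _, nil, q, _ => (eq_nil_of_length_zero q (hacyc _ q)).symm
  | _, cons p e, nil, _ => by simpa using hacyc _ (p.cons e)
  | _, cons p e, cons q f, hsub => by
    rcases List.mem_cons.1 (hsub _ List.mem_cons_self) with he | he
    · cases he
      congr
      refine eq_of_forall_mem_arrows hacyc p q fun s hs => ?_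
      rcases List.mem_cons.1 (hsub s (List.mem_cons_of_mem _ hs)) with rfl | hs'
      · exact absurd hs (notMem_arrows_of_hom hacyc p e e)
      · exact hs'
    · exact absurd he (notMem_arrows_of_hom hacyc q f e)

lemma weight_ite_mem_arrows {R : Type*} [MonoidWithZero R] [DecidableEq (Total V)]
    (L : List (Total V)) {a b : V} (p : Path a b) :
    p.weight (fun e => if ⟨_, _, e⟩ ∈ L then (1 : R) else 0)
      = if ∀ s ∈ p.arrows, s ∈ L then 1 else 0 := by
  induction p with
  | nil => simp
  | cons p e ih => by_cases he : ⟨_, _, e⟩ ∈ L <;> simp [ih, he]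

end Quiver.Path

lemma pathMatrix_single_apply {k : Type*} [Field k] {Q : Type*} [Quiver Q] {d : Q → ℕ}
    (z : ∀ i, Fin (d i)) (w : ∀ {i j : Q}, (i ⟶ j) → k) {a b : Q} (p : Quiver.Path a b) :
    pathMatrix (fun {i j} e => Matrix.single (z j) (z i) (w e)) p (z b) (z a) = p.weight w := by
  induction p with
  | nil => simp [pathMatrix]
  | cons p e ih => simp [pathMatrix, ih, mul_comm]

theorem stmt10_general {k : Type*} [Field k] {Q : Type u} [Quiver.{v+1} Q]
    (hacyc : ∀ (i : Q) (p : Quiver.Path i i), p.length = 0)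
    (d : Q → ℕ) (hd : ∀ i, 1 ≤ d i) {i j : Q} (ρ : Quiver.Path i j →₀ k)
    (h : ∀ W : ∀ (a b : Q), (a ⟶ b) → Matrix (Fin (d b)) (Fin (d a)) k,
      (ρ.sum fun ω c => c • pathMatrix (fun {a b} e => W a b e) ω) = 0) :
    ρ = 0 := by
  classical
  ext ω₀
  let z : ∀ a, Fin (d a) := fun a => ⟨0, hd a⟩
  let w : ∀ {a b : Q}, (a ⟶ b) → k := fun e => if ⟨_, _, e⟩ ∈ ω₀.arrows then 1 else 0
  have hweight (ω : Quiver.Path i j) : ω.weight w = if ω = ω₀ then 1 else 0 := by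
    rw [Quiver.Path.weight_ite_mem_arrows]
    exact if_congr ⟨Quiver.Path.eq_of_forall_mem_arrows hacyc ω ω₀, fun hω _ hs => hω ▸ hs⟩
      rfl rfl
  have hentry := congrFun (congrFun (h fun a b e => Matrix.single (z b) (z a) (w e)) (z j)) (z i)
  simpa [Finsupp.sum, Matrix.sum_apply, pathMatrix_single_apply, hweight] using hentry

/-- Let `Q` be a quiver with no oriented cycles having at least one arrow, and `d` a
dimension vector with all `d_i ≥ 1`. No nonzero linear combination `ρ` of paths from `i`
to `j` annihilates every representation in `rep_Q(d)`: if `W_ρ = 0` for all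
`W ∈ rep_Q(d)`, then `ρ = 0`. -/
theorem stmt10 {k : Type*} [Field k] {Q : Type u} [Quiver.{v+1} Q]
    (hacyc : ∀ (i : Q) (p : Quiver.Path i i), p.length = 0)
    (harrow : ∃ a b : Q, Nonempty (a ⟶ b))
    (d : Q → ℕ) (hd : ∀ i, 1 ≤ d i) {i j : Q} (ρ : Quiver.Path i j →₀ k)
    (h : ∀ W : ∀ (a b : Q), (a ⟶ b) → Matrix (Fin (d b)) (Fin (d a)) k,
      (ρ.sum fun ω c => c • pathMatrix (fun {a b} e => W a b e) ω) = 0) :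
    ρ = 0 :=
  stmt10_general hacyc d hd ρ h
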